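/- For every n ≥ 2, the rainbow extremal number of the 3-edge path in the n-dimensional hypercube satisfies ex*(Q_n, P_3) = 2^n. -/

import Mathlib

/-!
A properly coloured graph without a rainbow `P_3` and without triangles has the following
rigidity: if `v` has degree at least `3` and `x - a - v - y` is a path, then `xa` and `vy` must
share a colour, so `xa` would have the colour of two distinct edges at `v`. Hence every
neighbour of a vertex of degree `≥ 3` is a leaf; moving the darts out of such vertices onto
these leaves leaves every vertex with at most `2` darts, i.e. `|E| ≤ |V|`. The hypercube is
bipartite, so this gives `ex*(Q_n, P_3) ≤ 2^n`. Conversely, the edges of `Q_n` in the first two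
directions form a `2`-regular spanning subgraph with `2^n` edges, and colouring edges by their
direction is proper and uses only two colours, so it has no rainbow path with three edges.
-/

open SimpleGraph

/-- An edge coloring is proper on `H` if distinct edges of `H` sharing a vertex
receive different colors. -/
def IsProperEdgeColoring {V : Type*} (H : SimpleGraph V) (c : Sym2 V → ℕ) : Prop :=
  ∀ ⦃e₁ : Sym2 V⦄, e₁ ∈ H.edgeSet → ∀ ⦃e₂ : Sym2 V⦄, e₂ ∈ H.edgeSet →
    e₁ ≠ e₂ → (∃ v, v ∈ e₁ ∧ v ∈ e₂) → c e₁ ≠ c e₂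

/-- The graph `H`, edge colored by `c`, contains a rainbow copy of `F`:
there is an (injective) copy of `F` in `H` all of whose edges receive
pairwise distinct colors. -/
def HasRainbowCopy {V W : Type*} (H : SimpleGraph V) (c : Sym2 V → ℕ)
    (F : SimpleGraph W) : Prop :=
  ∃ f : W ↪ V, (∀ ⦃a b : W⦄, F.Adj a b → H.Adj (f a) (f b)) ∧
    ∀ ⦃a b a' b' : W⦄, F.Adj a b → F.Adj a' b' → s(a, b) ≠ s(a', b') →
      c s(f a, f b) ≠ c s(f a', f b')

/-- `H` admits a proper edge coloring with no rainbow copy of `F`. -/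
def RainbowFree {V W : Type*} (H : SimpleGraph V) (F : SimpleGraph W) : Prop :=
  ∃ c : Sym2 V → ℕ, IsProperEdgeColoring H c ∧ ¬ HasRainbowCopy H c F

/-- The rainbow extremal number `ex*(G,F)`: the maximum number of edges of a
subgraph `H` of `G` admitting a proper edge coloring with no rainbow copy of `F`. -/
noncomputable def rainbowExtremalNumber {V W : Type*} [Fintype V]
    (G : SimpleGraph V) (F : SimpleGraph W) : ℕ :=
  sSup {m | ∃ H : SimpleGraph V, H ≤ G ∧ RainbowFree H F ∧ m = H.edgeSet.ncard}

/-- The minimum degree of a subgraph, taken over its own vertex set. -/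
noncomputable def subMinDegree {V : Type*} {G : SimpleGraph V} (H : G.Subgraph) : ℕ :=
  sInf {d | ∃ v ∈ H.verts, d = (H.neighborSet v).ncard}

/-- `δ*(G,F)`: the maximum of the minimum degree over all subgraphs `H` of `G`
admitting a proper edge coloring with no rainbow copy of `F`. -/
noncomputable def rainbowMinDegree {V W : Type*} [Fintype V]
    (G : SimpleGraph V) (F : SimpleGraph W) : ℕ :=
  sSup {m | ∃ H : G.Subgraph, RainbowFree H.spanningCoe F ∧ m = subMinDegree H}

/-- The `n`-dimensional hypercube graph `Q_n`. -/
def cubeGraph (n : ℕ) : SimpleGraph (Fin n → Bool) where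
  Adj x y := {i | x i ≠ y i}.ncard = 1
  symm := by
    constructor
    intro x y h
    have hs : {i | y i ≠ x i} = {i | x i ≠ y i} := by ext i; simp [ne_comm]
    rw [hs]; exact h
  loopless := by
    constructor
    intro x h
    simp at h

/-- The star `K_{1,k}` with `k` edges. -/
def starGraph (k : ℕ) : SimpleGraph (Fin (k + 1)) where
  Adj i j := i ≠ j ∧ (i = 0 ∨ j = 0)
  symm := by constructor; intro i j h; exact ⟨h.1.symm, h.2.symm⟩
  loopless := by constructor; intro i h; exact h.1 rfl

/-- `G` contains a copy of `F` as a subgraph. -/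
def ContainsCopy {V W : Type*} (G : SimpleGraph V) (F : SimpleGraph W) : Prop :=
  ∃ f : W ↪ V, ∀ ⦃a b : W⦄, F.Adj a b → G.Adj (f a) (f b)

open Finset Function

namespace SimpleGraph

variable {V : Type*}

theorem pathGraph_adj_iff_exists_eq {n : ℕ} {a b : Fin (n + 1)} :
    (pathGraph (n + 1)).Adj a b ↔ ∃ i : Fin n, s(a, b) = s(i.castSucc, i.succ) := by
  rw [pathGraph_adj]
  constructor
  · rintro (h | h)
    · exact ⟨⟨a, by omega⟩, by rw [Sym2.eq_iff]; left; constructor <;> ext <;> simp [h]⟩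
    · exact ⟨⟨b, by omega⟩, by rw [Sym2.eq_iff]; right; constructor <;> ext <;> simp [h]⟩
  · rintro ⟨i, hi⟩
    rcases Sym2.eq_iff.mp hi with ⟨rfl, rfl⟩ | ⟨rfl, rfl⟩ <;> simp

theorem pathGraph_adj_castSucc_succ {n : ℕ} (i : Fin n) :
    (pathGraph (n + 1)).Adj i.castSucc i.succ :=
  pathGraph_adj_iff_exists_eq.mpr ⟨i, rfl⟩

theorem card_edgeFinset_le_card_of_degree_eq_one [Fintype V] [DecidableEq V]
    {G : SimpleGraph V} [DecidableRel G.Adj]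
    (h : ∀ ⦃v u⦄, G.Adj v u → 3 ≤ G.degree v → G.degree u = 1) :
    #G.edgeFinset ≤ Fintype.card V := by
  -- each dart `v → u` carries `low v + high v = 1`; the `high` part is moved to `u`
  let low (v : V) : ℕ := if 3 ≤ G.degree v then 0 else 1
  let high (v : V) : ℕ := if 3 ≤ G.degree v then 1 else 0
  have hswap :
      ∑ v, ∑ u ∈ G.neighborFinset v, high v = ∑ v, ∑ u ∈ G.neighborFinset v, high u :=
    sum_comm' (f := fun v _ ↦ high v) fun v u ↦ by simp [adj_comm]
  have hlocal (v : V) : ∑ u ∈ G.neighborFinset v, (low v + high u) ≤ 2 := by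
    by_cases hv : 3 ≤ G.degree v
    · have hzero : ∀ u ∈ G.neighborFinset v, low v + high u = 0 := fun u hu ↦ by
        simp [low, high, hv, h ((mem_neighborFinset ..).mp hu) hv]
      simp [sum_eq_zero hzero]
    by_cases hnbr : ∃ u ∈ G.neighborFinset v, 3 ≤ G.degree u
    · obtain ⟨u, hu, hu3⟩ := hnbr
      have hdeg := h ((mem_neighborFinset ..).mp hu).symm hu3
      calc _ ≤ #(G.neighborFinset v) • 2 := sum_le_card_nsmul _ _ _ fun u _ ↦ by
              simp only [low, high, if_neg hv]; split_ifs <;> omega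
        _ = 2 := by simp [hdeg]
    · push Not at hnbr
      calc _ = ∑ u ∈ G.neighborFinset v, 1 := sum_congr rfl fun u hu ↦ by
              simp [low, high, hv, hnbr u hu]
        _ ≤ 2 := by simp; omega
  have := calc
    2 * #G.edgeFinset = ∑ v, ∑ u ∈ G.neighborFinset v, (low v + high v) := by
      rw [← sum_degrees_eq_twice_card_edges]
      refine sum_congr rfl fun v _ ↦ ?_
      rw [← card_neighborFinset_eq_degree, card_eq_sum_ones]
      refine sum_congr rfl fun _ _ ↦ ?_
      simp only [low, high]; split_ifs <;> rfl
    _ = ∑ v, ∑ u ∈ G.neighborFinset v, (low v + high u) := by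
      simp only [sum_add_distrib, hswap]
    _ ≤ ∑ _v : V, 2 := sum_le_sum fun v _ ↦ hlocal v
    _ = 2 * Fintype.card V := by simp [mul_comm]
  omega

end SimpleGraph

section Rainbow

variable {V : Type*}

theorem hasRainbowCopy_pathGraph_iff {H : SimpleGraph V} {c : Sym2 V → ℕ} {n : ℕ} :
    HasRainbowCopy H c (pathGraph (n + 1)) ↔ ∃ p : Fin (n + 1) ↪ V,
      (∀ i : Fin n, H.Adj (p i.castSucc) (p i.succ)) ∧
        Injective fun i : Fin n ↦ c s(p i.castSucc, p i.succ) := by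
  constructor
  · rintro ⟨p, hadj, hrainbow⟩
    refine ⟨p, fun i ↦ hadj (pathGraph_adj_castSucc_succ i), fun i j hij ↦ ?_⟩
    by_contra hne
    refine hrainbow (pathGraph_adj_castSucc_succ i) (pathGraph_adj_castSucc_succ j) ?_ hij
    simp only [Ne, Sym2.eq_iff, Fin.ext_iff, Fin.val_castSucc, Fin.val_succ] at hne ⊢
    omega
  · rintro ⟨p, hadj, hinj⟩
    refine ⟨p, fun a b hab ↦ ?_, fun a b a' b' hab hab' hne ↦ ?_⟩
    · obtain ⟨i, hi⟩ := pathGraph_adj_iff_exists_eq.mp hab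
      rcases Sym2.eq_iff.mp hi with ⟨rfl, rfl⟩ | ⟨rfl, rfl⟩
      exacts [hadj i, (hadj i).symm]
    · obtain ⟨i, hi⟩ := pathGraph_adj_iff_exists_eq.mp hab
      obtain ⟨j, hj⟩ := pathGraph_adj_iff_exists_eq.mp hab'
      have hpath (a b : Fin (n + 1)) : s(p a, p b) = s(a, b).map p := rfl
      rw [hpath, hpath, hi, hj]
      exact hinj.ne fun hij ↦ hne (by rw [hi, hj, hij])

theorem not_hasRainbowCopy_pathGraph_of_forall_lt {H : SimpleGraph V} {c : Sym2 V → ℕ} {k : ℕ}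
    (hc : ∀ e ∈ H.edgeSet, c e < k) : ¬ HasRainbowCopy H c (pathGraph (k + 2)) := by
  rw [hasRainbowCopy_pathGraph_iff]
  rintro ⟨p, hadj, hinj⟩
  have := Fintype.card_le_of_injective (fun i ↦ (⟨_, hc _ (hadj i)⟩ : Fin k))
    fun i j hij ↦ hinj (Fin.val_eq_of_eq hij)
  simp at this

theorem IsProperEdgeColoring.mono {G H : SimpleGraph V} {c : Sym2 V → ℕ} (hGH : H ≤ G)
    (hc : IsProperEdgeColoring G c) : IsProperEdgeColoring H c :=
  fun _ he₁ _ he₂ ↦ hc (edgeSet_mono hGH he₁) (edgeSet_mono hGH he₂)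

theorem IsProperEdgeColoring.ne_of_adj {H : SimpleGraph V} {c : Sym2 V → ℕ}
    (hc : IsProperEdgeColoring H c) {u v w : V} (huv : H.Adj u v) (hvw : H.Adj v w)
    (huw : u ≠ w) : c s(u, v) ≠ c s(v, w) := by
  refine hc huv hvw ?_ ⟨v, Sym2.mem_mk_right u v, Sym2.mem_mk_left v w⟩
  rw [Ne, Sym2.eq_iff]
  rintro (⟨h, -⟩ | ⟨h, -⟩)
  exacts [huv.ne h, huw h]

theorem IsProperEdgeColoring.eq_of_not_hasRainbowCopy {H : SimpleGraph V} {c : Sym2 V → ℕ}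
    (hc : IsProperEdgeColoring H c) (hno : ¬ HasRainbowCopy H c (pathGraph 4)) {x a v y : V}
    (hxa : H.Adj x a) (hav : H.Adj a v) (hvy : H.Adj v y) (hxv : x ≠ v) (hxy : x ≠ y)
    (hay : a ≠ y) : c s(x, a) = c s(v, y) := by
  by_contra hne
  have h₁ := hc.ne_of_adj hxa hav hxv
  have h₂ := hc.ne_of_adj hav hvy hay
  refine hno (hasRainbowCopy_pathGraph_iff.mpr ⟨⟨![x, a, v, y], ?_⟩, ?_, ?_⟩)
  · intro i j hij
    fin_cases i <;> fin_cases j <;> simp_all [eq_comm, hxa.ne, hav.ne, hvy.ne]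
  · intro i
    fin_cases i <;> simpa
  · intro i j hij
    fin_cases i <;> fin_cases j <;> simp at hij ⊢
    exacts [h₁ hij, hne hij, h₁ hij.symm, h₂ hij, hne hij.symm, h₂ hij.symm]

theorem IsProperEdgeColoring.degree_eq_one_of_three_le_degree [Fintype V] [DecidableEq V]
    {H : SimpleGraph V} [DecidableRel H.Adj] {c : Sym2 V → ℕ} (hH : H.CliqueFree 3)
    (hc : IsProperEdgeColoring H c) (hno : ¬ HasRainbowCopy H c (pathGraph 4)) {v a : V}
    (hva : H.Adj v a) (hv : 3 ≤ H.degree v) : H.degree a = 1 := by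
  rw [← card_neighborFinset_eq_degree, card_eq_one]
  refine ⟨v, eq_singleton_iff_unique_mem.mpr ⟨by simpa using hva.symm, fun x hax ↦ ?_⟩⟩
  rw [mem_neighborFinset] at hax
  by_contra hxv
  have hvx : ¬ H.Adj v x := fun hvx ↦ hH {v, a, x} (is3Clique_triple_iff.mpr ⟨hva, hvx, hax⟩)
  have h_two : 1 < #((H.neighborFinset v).erase a) := by
    rw [card_erase_of_mem (by simpa using hva), card_neighborFinset_eq_degree]
    omega
  obtain ⟨y, hy, z, hz, hyz⟩ := one_lt_card.mp h_two
  simp only [mem_erase, mem_neighborFinset] at hy hz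
  have hcy := hc.eq_of_not_hasRainbowCopy hno hax.symm hva.symm hy.2 hxv
    (by rintro rfl; exact hvx hy.2) (Ne.symm hy.1)
  have hcz := hc.eq_of_not_hasRainbowCopy hno hax.symm hva.symm hz.2 hxv
    (by rintro rfl; exact hvx hz.2) (Ne.symm hz.1)
  exact hc.ne_of_adj hy.2.symm hz.2 hyz (by rw [Sym2.eq_swap, ← hcy, hcz])

theorem RainbowFree.ncard_edgeSet_le [Fintype V] {H : SimpleGraph V} (hH : H.CliqueFree 3)
    (hfree : RainbowFree H (pathGraph 4)) : H.edgeSet.ncard ≤ Fintype.card V := by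
  classical
  obtain ⟨c, hc, hno⟩ := hfree
  rw [← coe_edgeFinset, Set.ncard_coe_finset]
  exact card_edgeFinset_le_card_of_degree_eq_one fun _ _ hvu hv ↦
    hc.degree_eq_one_of_three_le_degree hH hno hvu hv

theorem rainbowExtremalNumber_eq {W : Type*} [Fintype V] {G : SimpleGraph V}
    {F : SimpleGraph W} {m : ℕ} (hwitness : ∃ H ≤ G, RainbowFree H F ∧ H.edgeSet.ncard = m)
    (hbound : ∀ H ≤ G, RainbowFree H F → H.edgeSet.ncard ≤ m) :
    rainbowExtremalNumber G F = m := by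
  obtain ⟨H, hHG, hH, rfl⟩ := hwitness
  refine IsGreatest.csSup_eq ⟨⟨H, hHG, hH, rfl⟩, ?_⟩
  rintro _ ⟨H', hH'G, hH', rfl⟩
  exact hbound H' hH'G hH'

end Rainbow

section Cube

variable {n : ℕ}

theorem ne_update_not_iff {x : Fin n → Bool} {i j : Fin n} :
    x j ≠ update x i (!x i) j ↔ j = i := by
  by_cases h : j = i
  · subst h; simp
  · simp [h]

theorem cubeGraph_adj_iff {x y : Fin n → Bool} :
    (cubeGraph n).Adj x y ↔ ∃ i, y = update x i (!x i) := by
  change {j | x j ≠ y j}.ncard = 1 ↔ _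
  rw [Set.ncard_eq_one]
  refine exists_congr fun i ↦ ⟨fun h ↦ funext fun j ↦ ?_, ?_⟩
  · have hj : x j ≠ y j ↔ j = i := Set.ext_iff.mp h j
    by_cases hji : j = i
    · subst hji
      rw [update_self, Bool.eq_not_iff]
      exact (hj.mpr rfl).symm
    · rw [update_of_ne hji]
      exact (not_not.mp (mt hj.mp hji)).symm
  · rintro rfl
    exact Set.ext fun j ↦ ne_update_not_iff

def cubeParity (x : Fin n → Bool) : ZMod 2 := ∑ j, ((x j).toNat : ZMod 2)

theorem cubeParity_update (x : Fin n → Bool) (i : Fin n) (b : Bool) :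
    cubeParity (update x i b) =
      (b.toNat : ZMod 2) + ∑ j ∈ univ \ {i}, ((x j).toNat : ZMod 2) := by
  rw [cubeParity, ← sum_update_of_mem (mem_univ i)]
  simp only [apply_update (fun _ b ↦ ((Bool.toNat b : ℕ) : ZMod 2))]

theorem cubeParity_update_not (x : Fin n → Bool) (i : Fin n) :
    cubeParity (update x i (!x i)) = cubeParity x + 1 := by
  conv_rhs => rw [← update_eq_self i x]
  rw [cubeParity_update, cubeParity_update, add_right_comm]
  congr 1
  cases x i <;> decide

theorem cubeGraph_isBipartite : (cubeGraph n).IsBipartite := by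
  let C : (cubeGraph n).Coloring (ZMod 2) := Coloring.mk cubeParity fun {x y} hxy ↦ by
    obtain ⟨i, rfl⟩ := cubeGraph_adj_iff.mp hxy
    rw [cubeParity_update_not]
    simp
  simpa using C.colorable

theorem cubeGraph_cliqueFree_three : (cubeGraph n).CliqueFree 3 :=
  cubeGraph_isBipartite.cliqueFree (by norm_num)

theorem injective_update_not (x : Fin n → Bool) : Injective fun i ↦ update x i (!x i) := by
  intro i j hij
  by_contra hne
  simpa [update_of_ne hne] using congrFun hij i

def cubeDirectionSubgraph (n : ℕ) (D : Finset (Fin n)) : SimpleGraph (Fin n → Bool) where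
  Adj x y := ∃ i ∈ D, y = update x i (!x i)
  symm := ⟨fun _ _ ⟨i, hi, hxy⟩ ↦ ⟨i, hi, by simp [hxy]⟩⟩
  loopless := ⟨fun _ ⟨i, _, hx⟩ ↦ by simpa using congrFun hx i⟩

theorem cubeDirectionSubgraph_le (D : Finset (Fin n)) : cubeDirectionSubgraph n D ≤ cubeGraph n :=
  fun _ _ ⟨i, _, hxy⟩ ↦ cubeGraph_adj_iff.mpr ⟨i, hxy⟩

theorem two_mul_ncard_edgeSet_cubeDirectionSubgraph (D : Finset (Fin n)) :
    2 * (cubeDirectionSubgraph n D).edgeSet.ncard = #D * 2 ^ n := by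
  classical
  have hdeg (x : Fin n → Bool) : (cubeDirectionSubgraph n D).degree x = #D := by
    rw [← card_neighborFinset_eq_degree, ← card_image_of_injective D (injective_update_not x)]
    congr 1
    ext y
    rw [mem_neighborFinset, mem_image]
    exact exists_congr fun _ ↦ and_congr_right' eq_comm
  rw [← coe_edgeFinset, Set.ncard_coe_finset, ← sum_degrees_eq_twice_card_edges]
  simp [hdeg, mul_comm]

/-- On an edge of `Q_n` the sum has a single term: the coordinate the edge flips. -/
def cubeEdgeDirection (n : ℕ) : Sym2 (Fin n → Bool) → ℕ :=
  Sym2.lift ⟨fun x y ↦ ∑ i with x i ≠ y i, (i : ℕ), fun x y ↦ by simp_rw [ne_comm]⟩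

theorem cubeEdgeDirection_update (x : Fin n → Bool) (i : Fin n) :
    cubeEdgeDirection n s(x, update x i (!x i)) = i := by
  simp [cubeEdgeDirection, ne_update_not_iff, filter_eq']

theorem isProperEdgeColoring_cubeEdgeDirection :
    IsProperEdgeColoring (cubeGraph n) (cubeEdgeDirection n) := by
  rintro e₁ he₁ e₂ he₂ hne ⟨v, hv₁, hv₂⟩ hcolor
  obtain ⟨a, rfl⟩ := Sym2.mem_iff_exists.mp hv₁
  obtain ⟨b, rfl⟩ := Sym2.mem_iff_exists.mp hv₂
  obtain ⟨i, rfl⟩ := cubeGraph_adj_iff.mp (mem_edgeSet _ |>.mp he₁)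
  obtain ⟨j, rfl⟩ := cubeGraph_adj_iff.mp (mem_edgeSet _ |>.mp he₂)
  rw [cubeEdgeDirection_update, cubeEdgeDirection_update, Fin.val_inj] at hcolor
  exact hne (by rw [hcolor])

theorem cubeEdgeDirection_lt_of_mem_edgeSet {D : Finset (Fin n)} {k : ℕ}
    (hD : ∀ i ∈ D, i.val < k)
    {e : Sym2 (Fin n → Bool)} (he : e ∈ (cubeDirectionSubgraph n D).edgeSet) :
    cubeEdgeDirection n e < k := by
  induction e with
  | h x y =>
    obtain ⟨i, hi, rfl⟩ := (mem_edgeSet _).mp he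
    rw [cubeEdgeDirection_update]
    exact hD i hi

end Cube

/-- For every `n ≥ 2`, `ex*(Q_n, P_3) = 2^n`. -/
theorem stmt5 (n : ℕ) (hn : 2 ≤ n) :
    rainbowExtremalNumber (cubeGraph n) (SimpleGraph.pathGraph 4) = 2 ^ n := by
  let D : Finset (Fin n) := univ.map (Fin.castLEEmb hn)
  have hD : ∀ i ∈ D, i.val < 2 := fun i hi ↦ by
    obtain ⟨j, -, rfl⟩ := mem_map.mp hi
    exact j.isLt
  have hcard : (cubeDirectionSubgraph n D).edgeSet.ncard = 2 ^ n := by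
    have := two_mul_ncard_edgeSet_cubeDirectionSubgraph D
    rw [show #D = 2 by simp [D]] at this
    omega
  have hle := cubeDirectionSubgraph_le D
  refine rainbowExtremalNumber_eq ⟨cubeDirectionSubgraph n D, hle,
    ⟨cubeEdgeDirection n, isProperEdgeColoring_cubeEdgeDirection.mono hle,
      not_hasRainbowCopy_pathGraph_of_forall_lt fun _ ↦ cubeEdgeDirection_lt_of_mem_edgeSet hD⟩,
    hcard⟩ fun H hH hfree ↦ ?_
  simpa using hfree.ncard_edgeSet_le (cubeGraph_cliqueFree_three.anti hH)
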